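/- For each fixed 0 < r < 1, the function θ ↦ Re G(r e^{iθ}) is strictly decreasing on [0, π], where G(z) = 3 Log(1+z) − Log(1 + z e^{2iφ}) with φ = Arg(3 + z). -/

import Mathlib

open Real Complex

noncomputable def G (z : ℂ) : ℂ :=
  3 * Complex.log (1 + z) - Complex.log (1 + z * Complex.exp (2 * (3 + z).arg * Complex.I))

noncomputable def Faux (r u : ℝ) : ℝ :=
  (3/2) * Real.log (1 + 2*u + r^2) + (1/2) * Real.log (9 + 6*u + r^2)
    - (1/2) * Real.log (8*(1+u)^3 + (1-r^2)^2)

lemma ha_pos {r u : ℝ} (hr1 : r < 1) (hu : -r ≤ u) : 0 < 1 + 2*u + r^2 := by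
  nlinarith [sq_nonneg (1 - r), mul_pos (sub_pos.mpr hr1) (sub_pos.mpr hr1)]

lemma hb_pos {r u : ℝ} (hr0 : 0 < r) (hr1 : r < 1) (hu : -r ≤ u) : 0 < 9 + 6*u + r^2 := by
  nlinarith

lemma hd_pos {r u : ℝ} (hr0 : 0 < r) (hr1 : r < 1) (hu : -r ≤ u) :
    0 < 8*(1+u)^3 + (1-r^2)^2 := by
  have h1 : (0:ℝ) < 1 + u := by linarith
  nlinarith [pow_pos h1 3, sq_nonneg (1 - r^2)]

lemma log_abs_eq (w : ℂ) : Real.log (‖w‖) = Real.log (Complex.normSq w) / 2 := by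
  rw [Complex.normSq_eq_norm_sq, Real.log_pow]
  push_cast
  ring

lemma ReG_eq (r : ℝ) (hr0 : 0 < r) (hr1 : r < 1) (z : ℂ) (habs : ‖z‖ = r) :
    (G z).re = Faux r z.re := by
  set x := z.re with hx
  set y := z.im with hy
  have hxy : x^2 + y^2 = r^2 := by
    have h := Complex.sq_norm z
    rw [habs, Complex.normSq_apply] at h
    rw [← hx, ← hy] at h
    linear_combination -h
  have hxr : -r ≤ x := by
    have h := Complex.abs_re_le_norm z
    rw [habs] at h
    exact (abs_le.mp h).1
  have ha := ha_pos hr1 hxr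
  have hb := hb_pos hr0 hr1 hxr
  have hd := hd_pos hr0 hr1 hxr
  have hw : (3 : ℂ) + z ≠ 0 := by
    intro h
    have : ((3:ℂ) + z).re = 0 := by rw [h]; simp
    simp only [Complex.add_re] at this
    norm_num at this
    rw [← hx] at this
    linarith
  have h1z : (1 : ℂ) + z ≠ 0 := by
    intro h
    have : ((1:ℂ) + z).re = 0 := by rw [h]; simp
    simp only [Complex.add_re] at this
    norm_num at this
    rw [← hx] at this
    linarith
  have habsw : ‖3 + z‖ ≠ 0 := norm_ne_zero_iff.mpr hw
  have habsC : ((‖3 + z‖ : ℝ) : ℂ) ≠ 0 := Complex.ofReal_ne_zero.mpr habsw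
  have hconj : (starRingEnd ℂ) (3 + z) ≠ 0 := fun h => hw (star_eq_zero.mp h)
  -- exponential
  have hexp1 : Complex.exp (((3+z).arg : ℂ) * Complex.I)
      = (3 + z) / (‖3 + z‖ : ℂ) := by
    rw [eq_div_iff habsC]
    rw [mul_comm]
    exact Complex.norm_mul_exp_arg_mul_I (3 + z)
  have hexp : Complex.exp (2 * ((3+z).arg : ℂ) * Complex.I)
      = (3 + z)^2 / ((‖3 + z‖ : ℂ))^2 := by
    rw [show (2 * ((3+z).arg : ℂ) * Complex.I)
        = ((3+z).arg : ℂ) * Complex.I + ((3+z).arg : ℂ) * Complex.I by ring,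
      Complex.exp_add, hexp1, div_mul_div_comm, ← sq, ← sq]
  have hsq : ((‖3 + z‖ : ℂ))^2 = (3 + z) * (starRingEnd ℂ) (3 + z) := by
    rw [← Complex.ofReal_pow, ← Complex.normSq_eq_norm_sq, Complex.mul_conj]
  have hmain : (1 : ℂ) + z * Complex.exp (2 * ((3+z).arg : ℂ) * Complex.I)
      = ((starRingEnd ℂ) (3 + z) + z * (3 + z)) / ((starRingEnd ℂ) (3 + z)) := by
    rw [hexp, hsq, sq, mul_div_mul_left _ _ hw]
    rw [show (starRingEnd ℂ) (3 + z) + z * (3 + z)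
        = (1 + z * ((3 + z) / (starRingEnd ℂ) (3 + z))) * (starRingEnd ℂ) (3 + z) by
      rw [add_mul, one_mul, mul_assoc, div_mul_cancel₀ _ hconj]]
    rw [mul_div_cancel_right₀ _ hconj]
  -- normSq computations
  have hNre : ((starRingEnd ℂ) (3 + z) + z * (3 + z)).re = 3 + 4*x + x^2 - y^2 := by
    simp [Complex.add_re, Complex.mul_re, Complex.conj_re, Complex.conj_im, ← hx, ← hy]
    ring
  have hNim : ((starRingEnd ℂ) (3 + z) + z * (3 + z)).im = 2*y + 2*x*y := by
    simp [Complex.add_im, Complex.mul_im, Complex.conj_re, Complex.conj_im, ← hx, ← hy]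
    ring
  have hN2 : Complex.normSq ((starRingEnd ℂ) (3 + z) + z * (3 + z))
      = 8*(1+x)^3 + (1-r^2)^2 := by
    rw [Complex.normSq_apply, hNre, hNim]
    linear_combination (x^2 + y^2 + r^2 - 2) * hxy
  have h1n : Complex.normSq (1 + z) = 1 + 2*x + r^2 := by
    rw [Complex.normSq_apply]
    simp [Complex.add_re, Complex.add_im, ← hx, ← hy]
    linear_combination hxy
  have hwn : Complex.normSq (3 + z) = 9 + 6*x + r^2 := by
    rw [Complex.normSq_apply]
    simp [Complex.add_re, Complex.add_im, ← hx, ← hy]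
    linear_combination hxy
  have hN : (starRingEnd ℂ) (3 + z) + z * (3 + z) ≠ 0 := by
    intro h
    rw [h, Complex.normSq_zero] at hN2
    linarith
  have habsN : ‖(starRingEnd ℂ) (3 + z) + z * (3 + z)‖ ≠ 0 :=
    norm_ne_zero_iff.mpr hN
  -- put it together
  have hre : (G z).re = 3 * Real.log (‖1 + z‖)
      - (Real.log (‖(starRingEnd ℂ) (3 + z) + z * (3 + z)‖)
        - Real.log (‖3 + z‖)) := by
    unfold G
    rw [hmain]
    rw [Complex.sub_re, Complex.mul_re]
    rw [Complex.log_re, Complex.log_re]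
    rw [norm_div, Complex.norm_conj]
    rw [Real.log_div habsN habsw]
    norm_num
  rw [hre, log_abs_eq, log_abs_eq, log_abs_eq, h1n, hN2, hwn]
  unfold Faux
  ring

lemma Faux_strictMono (r : ℝ) (hr0 : 0 < r) (hr1 : r < 1) :
    StrictMonoOn (Faux r) (Set.Icc (-r) r) := by
  apply strictMonoOn_of_deriv_pos (convex_Icc _ _)
  · -- continuity
    unfold Faux
    apply ContinuousOn.sub (ContinuousOn.add ?_ ?_) ?_
    · apply ContinuousOn.mul continuousOn_const
      apply ContinuousOn.comp Real.continuousOn_log (by fun_prop)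
      intro u hu
      simp only [Set.mem_Icc] at hu
      exact (ha_pos hr1 hu.1).ne'
    · apply ContinuousOn.mul continuousOn_const
      apply ContinuousOn.comp Real.continuousOn_log (by fun_prop)
      intro u hu
      simp only [Set.mem_Icc] at hu
      exact (hb_pos hr0 hr1 hu.1).ne'
    · apply ContinuousOn.mul continuousOn_const
      apply ContinuousOn.comp Real.continuousOn_log (by fun_prop)
      intro u hu
      simp only [Set.mem_Icc] at hu
      exact (hd_pos hr0 hr1 hu.1).ne'
  · intro u hu
    rw [interior_Icc] at hu
    obtain ⟨hu1, hu2⟩ := hu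
    have hxr : -r ≤ u := le_of_lt hu1
    have ha := ha_pos hr1 hxr
    have hb := hb_pos hr0 hr1 hxr
    have hd := hd_pos hr0 hr1 hxr
    have hv : (0:ℝ) < 1 + u := by linarith
    -- derivatives of the inner polynomials
    have hA : HasDerivAt (fun v : ℝ => 1 + 2*v + r^2) 2 u := by
      have : HasDerivAt (fun v : ℝ => 1 + 2*v + r^2) (0 + 2*1 + 0) u :=
        (((hasDerivAt_const u (1:ℝ)).add ((hasDerivAt_id u).const_mul 2)).add
          (hasDerivAt_const u (r^2)))
      simpa using this
    have hB : HasDerivAt (fun v : ℝ => 9 + 6*v + r^2) 6 u := by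
      have : HasDerivAt (fun v : ℝ => 9 + 6*v + r^2) (0 + 6*1 + 0) u :=
        (((hasDerivAt_const u (9:ℝ)).add ((hasDerivAt_id u).const_mul 6)).add
          (hasDerivAt_const u (r^2)))
      simpa using this
    have hD : HasDerivAt (fun v : ℝ => 8*(1+v)^3 + (1-r^2)^2) (24*(1+u)^2) u := by
      have h0 : HasDerivAt (fun v : ℝ => 1 + v) 1 u := by
        simpa using (hasDerivAt_id' u).const_add (1:ℝ)
      have h1 : HasDerivAt (fun v : ℝ => (1+v)^3) (3*(1+u)^2*1) u := h0.pow 3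
      have h2 : HasDerivAt (fun v : ℝ => 8*(1+v)^3) (8*(3*(1+u)^2*1)) u := h1.const_mul 8
      have := h2.add_const ((1-r^2)^2)
      rw [show (24*(1+u)^2 : ℝ) = 8*(3*(1+u)^2*1) by ring]
      exact this
    have hLA : HasDerivAt (fun v : ℝ => Real.log (1 + 2*v + r^2)) ((1+2*u+r^2)⁻¹ * 2) u :=
      (Real.hasDerivAt_log ha.ne').comp (h := fun v : ℝ => 1 + 2*v + r^2) u hA
    have hLB : HasDerivAt (fun v : ℝ => Real.log (9 + 6*v + r^2)) ((9+6*u+r^2)⁻¹ * 6) u :=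
      (Real.hasDerivAt_log hb.ne').comp (h := fun v : ℝ => 9 + 6*v + r^2) u hB
    have hLD : HasDerivAt (fun v : ℝ => Real.log (8*(1+v)^3 + (1-r^2)^2))
        ((8*(1+u)^3 + (1-r^2)^2)⁻¹ * (24*(1+u)^2)) u :=
      (Real.hasDerivAt_log hd.ne').comp (h := fun v : ℝ => 8*(1+v)^3 + (1-r^2)^2) u hD
    have H : HasDerivAt (Faux r)
        ((3/2) * ((1+2*u+r^2)⁻¹ * 2) + (1/2) * ((9+6*u+r^2)⁻¹ * 6)
          - (1/2) * ((8*(1+u)^3 + (1-r^2)^2)⁻¹ * (24*(1+u)^2))) u := by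
      exact ((hLA.const_mul (3/2)).add (hLB.const_mul (1/2))).sub (hLD.const_mul (1/2))
    rw [H.deriv]
    have hq : (0:ℝ) < 1 - r^2 := by nlinarith
    have heq : (3/2) * ((1+2*u+r^2)⁻¹ * 2) + (1/2) * ((9+6*u+r^2)⁻¹ * 6)
          - (1/2) * ((8*(1+u)^3 + (1-r^2)^2)⁻¹ * (24*(1+u)^2))
        = (3*(9+6*u+r^2)*(8*(1+u)^3 + (1-r^2)^2)
            + 3*(1+2*u+r^2)*(8*(1+u)^3 + (1-r^2)^2)
            - 12*(1+u)^2*((1+2*u+r^2)*(9+6*u+r^2)))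
          / ((1+2*u+r^2)*(9+6*u+r^2)*(8*(1+u)^3 + (1-r^2)^2)) := by
      rw [eq_div_iff (mul_pos (mul_pos ha hb) hd).ne']
      have e1 := mul_inv_cancel₀ ha.ne'
      have e2 := mul_inv_cancel₀ hb.ne'
      have e3 := mul_inv_cancel₀ hd.ne'
      linear_combination (3 * (9+6*u+r^2)*(8*(1+u)^3 + (1-r^2)^2)) * e1 + (3 * (1+2*u+r^2)*(8*(1+u)^3 + (1-r^2)^2)) * e2 - (12*(1+u)^2*((1+2*u+r^2)*(9+6*u+r^2))) * e3
    rw [heq]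
    apply div_pos
    · have hid : 3*(9+6*u+r^2)*(8*(1+u)^3 + (1-r^2)^2)
            + 3*(1+2*u+r^2)*(8*(1+u)^3 + (1-r^2)^2)
            - 12*(1+u)^2*((1+2*u+r^2)*(9+6*u+r^2))
          = 3*(16*(1+u)^4 + 16*(1-r^2)*(1+u)^3 + 4*(1-r^2)*(r^2+3)*(1+u)^2
              + (1-r^2)^2*(8*(1+u)+2+2*r^2)) := by
        ring
      rw [hid]
      have t1 : (0:ℝ) < (1+u)^4 := pow_pos hv 4
      have t2 : (0:ℝ) < (1-r^2)*(1+u)^3 := mul_pos hq (pow_pos hv 3)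
      have t3 : (0:ℝ) < (1-r^2)*(r^2+3)*(1+u)^2 :=
        mul_pos (mul_pos hq (by nlinarith)) (pow_pos hv 2)
      have t4 : (0:ℝ) < (1-r^2)^2*(8*(1+u)+2+2*r^2) :=
        mul_pos (pow_pos hq 2) (by nlinarith)
      nlinarith
    · exact mul_pos (mul_pos ha hb) hd

theorem ReG_strictAnti (r : ℝ) (hr0 : 0 < r) (hr1 : r < 1) :
    StrictAntiOn (fun θ : ℝ => (G ((r : ℂ) * Complex.exp (θ * Complex.I))).re)
      (Set.Icc 0 π) := by
  intro θ1 hθ1 θ2 hθ2 hlt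
  have habs : ∀ θ : ℝ, ‖(r : ℂ) * Complex.exp (θ * Complex.I)‖ = r := by
    intro θ
    rw [norm_mul, Complex.norm_exp_ofReal_mul_I, Complex.norm_real, Real.norm_eq_abs, abs_of_pos hr0, mul_one]
  have hre : ∀ θ : ℝ, ((r : ℂ) * Complex.exp (θ * Complex.I)).re = r * Real.cos θ := by
    intro θ
    rw [Complex.re_ofReal_mul, Complex.exp_ofReal_mul_I_re]
  simp only
  rw [ReG_eq r hr0 hr1 _ (habs θ1), ReG_eq r hr0 hr1 _ (habs θ2), hre, hre]
  have hcos : Real.cos θ2 < Real.cos θ1 := Real.strictAntiOn_cos hθ1 hθ2 hlt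
  have hmem : ∀ θ : ℝ, r * Real.cos θ ∈ Set.Icc (-r) r := by
    intro θ
    constructor
    · nlinarith [Real.neg_one_le_cos θ]
    · nlinarith [Real.cos_le_one θ]
  exact Faux_strictMono r hr0 hr1 (hmem θ2) (hmem θ1)
    (by nlinarith)
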